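/- arXiv:2208.05486 — 3 statements merged into one kernel-verified Lean document; each statement's English description precedes it below -/
import Mathlib

section
/- Let r be a positive real number, S_0 = κ^{-1}·[[1,√r],[√r,-1]] for some nonzero complex κ with S_0² = 1, and for a real φ let U_φ = [[e^{iφ},0],[0,1]]. Set 𝒮 = U_φ S_0 U_φ†. If the Verlinde coefficient N_{11}^0 = Σ_l 𝒮_{1l}𝒮_{1l}(𝒮^{-1})_{0l}/𝒮_{0l} is a real number, then e^{-2iφ} is real, i.e. φ ∈ {0, π} modulo π. -/
/-!
Write `s = √r` and `e = exp(iφ)`. Since `U_φ` is unitary, `𝒮 = U_φ S₀ U_φ†` is an involution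
like `S₀`, so `𝒮⁻¹ = 𝒮` and the Verlinde sum collapses to `𝒮₁₀² + 𝒮₁₁²` (the entries
`𝒮₀ₗ ∈ {κ⁻¹, κ⁻¹ s e}` are nonzero because `r > 0`). Conjugating by `U_φ` only rescales the
off-diagonal entries, `𝒮 = κ⁻¹ [[1, s e], [s ē, -1]]`, so `N₁₁⁰ = κ⁻² (r ē² + 1)`. A traceless
`2 × 2` matrix squares to `-det` times the identity, so `S₀² = 1` says `κ⁻² (1 + r) = 1`, and
therefore `e^{-2iφ} = ē² = ((1 + r) N₁₁⁰ - 1) / r` is real.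
-/

open Matrix Complex

theorem Matrix.smul_traceless_fin_two_mul_self {R : Type*} [CommRing R] (k a b c : R) :
    (k • !![a, b; c, -a]) * (k • !![a, b; c, -a]) =
      (k ^ 2 * (a ^ 2 + b * c)) • (1 : Matrix (Fin 2) (Fin 2) R) := by
  ext i j
  fin_cases i <;> fin_cases j <;> simp <;> ring

theorem Matrix.fin_two_diag_mul_mul_conjTranspose {R : Type*} [CommRing R] [StarRing R] (a : R)
    (M : Matrix (Fin 2) (Fin 2) R) :
    !![a, 0; 0, 1] * M * !![a, 0; 0, 1]ᴴ =
      !![a * M 0 0 * star a, a * M 0 1; M 1 0 * star a, M 1 1] := by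
  ext i j
  fin_cases i <;> fin_cases j <;> simp [mul_apply, Fin.sum_univ_two, vecMul, dotProduct]

theorem Matrix.sum_mul_mul_inv_div_of_mul_self_eq_one {n K : Type*} [Fintype n] [DecidableEq n]
    [Field K] {S : Matrix n n K} (hS : S * S = 1) {j : n} (hj : ∀ l, S j l ≠ 0) (i i' : n) :
    ∑ l, S i l * S i' l * S⁻¹ j l / S j l = ∑ l, S i l * S i' l := by
  rw [inv_eq_left_inv hS]
  exact Finset.sum_congr rfl fun l _ => mul_div_cancel_right₀ _ (hj l)

theorem Unitary.conj_mul_self_of_mul_self_eq_one {R : Type*} [Monoid R] [StarMul R] {U S : R}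
    (hU : U ∈ unitary R) (hS : S * S = 1) : U * S * star U * (U * S * star U) = 1 :=
  calc U * S * star U * (U * S * star U) = U * (S * (star U * U) * S) * star U := by
        simp only [mul_assoc]
    _ = 1 := by
        rw [Unitary.star_mul_self_of_mem hU, mul_one, hS, mul_one, Unitary.mul_star_self_of_mem hU]

theorem Complex.star_exp_ofReal_mul_I (φ : ℝ) : star (exp (φ * I)) = exp (-(φ * I)) := by
  rw [star_def, ← exp_conj]
  simp

theorem Complex.exp_ofReal_mul_I_mul_exp_neg (φ : ℝ) : exp (φ * I) * exp (-(φ * I)) = 1 := by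
  rw [← exp_add, add_neg_cancel, exp_zero]

theorem Complex.phase_mem_unitaryGroup (φ : ℝ) :
    !![exp (φ * I), 0; 0, 1] ∈ unitaryGroup (Fin 2) ℂ := by
  rw [mem_unitaryGroup_iff, star_eq_conjTranspose]
  simpa [star_exp_ofReal_mul_I, exp_ofReal_mul_I_mul_exp_neg, one_fin_two] using
    fin_two_diag_mul_mul_conjTranspose (exp (φ * I)) 1

theorem Complex.phase_mul_smul_mul_conjTranspose (φ : ℝ) (k b : ℂ) :
    !![exp (φ * I), 0; 0, 1] * (k • !![1, b; b, -1]) * !![exp (φ * I), 0; 0, 1]ᴴ =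
      k • !![1, b * exp (φ * I); b * exp (-(φ * I)), -1] := by
  rw [Matrix.mul_smul, Matrix.smul_mul, fin_two_diag_mul_mul_conjTranspose, star_exp_ofReal_mul_I]
  congr 1
  simp [exp_ofReal_mul_I_mul_exp_neg, mul_comm _ b]

theorem eq_div_of_mul_one_add_eq_one {K : Type*} [Field K] {k r z N : K} (hr : r ≠ 0)
    (hk : k * (1 + r) = 1) (hN : k * (r * z + 1) = N) : z = ((1 + r) * N - 1) / r := by
  rw [eq_div_iff hr, ← hN]
  linear_combination (-(r * z) - 1) * hk

/-- If `𝒮 = U_φ S₀ U_φ†` with `S₀ = κ⁻¹ [[1,√r],[√r,-1]]`, `S₀² = 1`, and the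
Verlinde coefficient `N₁₁⁰` is a real number, then `e^{-2iφ}` is real. -/
theorem stmt_7 (r : ℝ) (hr : 0 < r) (κ : ℂ) (hκ : κ ≠ 0)
    (S₀ : Matrix (Fin 2) (Fin 2) ℂ)
    (hS₀ : S₀ = κ⁻¹ • !![1, ((Real.sqrt r : ℝ) : ℂ); ((Real.sqrt r : ℝ) : ℂ), -1])
    (hS₀sq : S₀ ^ 2 = 1)
    (φ : ℝ) (U : Matrix (Fin 2) (Fin 2) ℂ)
    (hU : U = !![Complex.exp (φ * Complex.I), 0; 0, 1])
    (calS : Matrix (Fin 2) (Fin 2) ℂ) (hcalS : calS = U * S₀ * Uᴴ)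
    (hreal : ∃ x : ℝ, (∑ l : Fin 2, calS 1 l * calS 1 l * calS⁻¹ 0 l / calS 0 l) = (x : ℂ)) :
    ∃ y : ℝ, Complex.exp (-(2 * φ) * Complex.I) = (y : ℂ) := by
  obtain ⟨N, hN⟩ := hreal
  set s : ℂ := ((Real.sqrt r : ℝ) : ℂ)
  have hs : s ^ 2 = r := by simp only [s, ← ofReal_pow, Real.sq_sqrt hr.le]
  have hs0 : s ≠ 0 := ofReal_ne_zero.mpr (Real.sqrt_pos.mpr hr).ne'
  have hcalS_eq : calS = κ⁻¹ • !![1, s * exp (φ * I); s * exp (-(φ * I)), -1] := by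
    rw [hcalS, hU, hS₀, phase_mul_smul_mul_conjTranspose]
  have hκr : κ⁻¹ ^ 2 * (1 + r) = 1 := by
    rw [sq, hS₀, smul_traceless_fin_two_mul_self] at hS₀sq
    simpa [← sq, hs] using congrFun₂ hS₀sq 0 0
  have hinvol : calS * calS = 1 := by
    rw [hcalS, hU, ← star_eq_conjTranspose]
    exact Unitary.conj_mul_self_of_mul_self_eq_one (phase_mem_unitaryGroup φ) (sq S₀ ▸ hS₀sq)
  have hrow (l : Fin 2) : calS 0 l ≠ 0 := by
    fin_cases l <;> simp [hcalS_eq, hκ, hs0, exp_ne_zero]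
  rw [sum_mul_mul_inv_div_of_mul_self_eq_one hinvol hrow, Fin.sum_univ_two, hcalS_eq] at hN
  refine ⟨((1 + r) * N - 1) / r, ?_⟩
  have hexp : exp (-(2 * φ) * I) = exp (-(φ * I)) ^ 2 := by
    rw [← exp_nat_mul]
    ring_nf
  rw [hexp]
  push_cast
  refine eq_div_of_mul_one_add_eq_one (ofReal_ne_zero.mpr hr.ne') hκr ?_
  rw [← hN, ← hs]
  simp only [Matrix.smul_apply, of_apply, cons_val', cons_val_zero, cons_val_fin_one,
    cons_val_one, smul_eq_mul]
  ring
end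

section
/- There is no two-dimensional unitary representation ρ of SL₂(ℤ) that is a direct sum of two one-dimensional representations and satisfies the admissibility condition that both off-diagonal-row entries ρ(S)_{01} and ρ(S)_{10} are strictly positive reals in some basis where ρ(T) is diagonal. More precisely: if ρ ≅ ζ^a ⊕ ζ^b with a,b ∈ {0,…,11}, then in any basis in which ρ is unitary and ρ(T) is diagonal, the matrix ρ(S) is diagonal (hence ρ(S)_{01} = 0). -/
open Matrix Complex MatrixGroups

/-- The generator `S` of `SL(2, ℤ)`. -/
def SmatZ : SL(2, ℤ) :=
  ⟨!![0, -1; 1, 0], by norm_num [Matrix.det_fin_two_of]⟩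

/-- The generator `T` of `SL(2, ℤ)`. -/
def TmatZ : SL(2, ℤ) :=
  ⟨!![1, 1; 0, 1], by norm_num [Matrix.det_fin_two_of]⟩

/-! Being conjugate to diagonal matrices, the images of `ρ` commute. In an abelian quotient
the relation `(ST)³ = S²` of `SL(2, ℤ)` becomes `S = T⁻³`, so `ρ(S) = ρ(T)⁻³`, which is
diagonal as soon as `ρ(T)` is. -/

theorem Commute.conj_of_mul_eq_one {M : Type*} [Monoid M] {p q a b : M} (hqp : q * p = 1)
    (h : Commute a b) : Commute (p * a * q) (p * b * q) := by
  simp only [Commute, SemiconjBy, mul_assoc, ← mul_assoc q p, hqp, one_mul, ← mul_assoc a b,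
    h.eq]

theorem SmatZ_mul_TmatZ_pow_three : (SmatZ * TmatZ) ^ 3 = SmatZ ^ 2 := by
  ext i j
  fin_cases i <;> fin_cases j <;>
    simp [SmatZ, TmatZ, pow_succ, Matrix.mul_apply, Fin.sum_univ_succ] <;> rfl

theorem map_SmatZ_mul_map_TmatZ_pow_three {M : Type*} [Monoid M] (f : SL(2, ℤ) →* M)
    (h : Commute (f SmatZ) (f TmatZ)) : f SmatZ * f TmatZ ^ 3 = 1 := by
  have hrel := congrArg f SmatZ_mul_TmatZ_pow_three
  rw [map_pow, map_mul, h.mul_pow, map_pow, pow_succ, mul_assoc] at hrel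
  have hS : IsUnit (f SmatZ ^ 2) := ((Group.isUnit SmatZ).map f).pow 2
  exact hS.mul_left_cancel (hrel.trans (mul_one _).symm)

theorem isDiag_map_SmatZ_of_isDiag_map_TmatZ {n R : Type*} [Fintype n] [DecidableEq n]
    [CommRing R] (ρ : SL(2, ℤ) →* Matrix n n R) (hcomm : Commute (ρ SmatZ) (ρ TmatZ))
    (hT : (ρ TmatZ).IsDiag) : (ρ SmatZ).IsDiag := by
  have hS : ρ SmatZ = diagonal (Ring.inverse (diag (ρ TmatZ) ^ 3)) := by
    rw [← inv_diagonal, ← diagonal_pow, hT.diagonal_diag]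
    exact (inv_eq_left_inv (map_SmatZ_mul_map_TmatZ_pow_three ρ hcomm)).symm
  exact hS ▸ isDiag_diagonal _

theorem stmt_8_general (ρ : SL(2, ℤ) →* Matrix (Fin 2) (Fin 2) ℂ)
    (χ₁ χ₂ : SL(2, ℤ) →* ℂˣ)
    (P : Matrix (Fin 2) (Fin 2) ℂ)
    (hconj : ∀ γ : SL(2, ℤ),
      ρ γ = P * Matrix.diagonal ![(χ₁ γ : ℂ), (χ₂ γ : ℂ)] * P⁻¹)
    (hTdiag : (ρ TmatZ).IsDiag) :
    (ρ SmatZ).IsDiag ∧ ρ SmatZ 0 1 = 0 := by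
  have hPP : P⁻¹ * P = 1 := by
    have hχ : ![(χ₁ 1 : ℂ), (χ₂ 1 : ℂ)] = 1 := by
      ext i
      fin_cases i <;> simp
    rw [mul_eq_one_comm, ← map_one ρ, hconj, hχ, diagonal_one', mul_one]
  have hcomm : Commute (ρ SmatZ) (ρ TmatZ) := by
    rw [hconj, hconj]
    exact (commute_diagonal _ _).conj_of_mul_eq_one hPP
  have hS := isDiag_map_SmatZ_of_isDiag_map_TmatZ ρ hcomm hTdiag
  exact ⟨hS, hS zero_ne_one⟩

/-- If a two-dimensional representation `ρ` of `SL(2,ℤ)` is a direct sum of two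
one-dimensional representations (i.e. conjugate to `diag(χ₁, χ₂)`), takes values in
unitary matrices, and `ρ(T)` is diagonal, then `ρ(S)` is diagonal; hence `ρ` cannot be
admissible (its `S`-matrix has no strictly positive off-diagonal first-row entry). -/
theorem stmt_8 (ρ : SL(2, ℤ) →* Matrix (Fin 2) (Fin 2) ℂ)
    (χ₁ χ₂ : SL(2, ℤ) →* ℂˣ)
    (P : Matrix (Fin 2) (Fin 2) ℂ) (hP : IsUnit P)
    (hconj : ∀ γ : SL(2, ℤ),
      ρ γ = P * Matrix.diagonal ![(χ₁ γ : ℂ), (χ₂ γ : ℂ)] * P⁻¹)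
    (hunitary : ∀ γ : SL(2, ℤ), ρ γ * (ρ γ)ᴴ = 1)
    (hTdiag : (ρ TmatZ).IsDiag) :
    (ρ SmatZ).IsDiag ∧ ρ SmatZ 0 1 = 0 :=
  stmt_8_general ρ χ₁ χ₂ P hconj hTdiag
end

section
/- Define m₀ = 53/60, m₁ = 17/60, κ = e^{2πi(2m₀+m₁)} - e^{2πi(m₀+2m₁)}, and r = -e^{6πi(m₀+m₁)}κ² - 1. Then r = φ², where φ = (1+√5)/2 is the golden ratio, and |κ|² = 2 + φ. -/
open Complex

/-- For `m₀ = 53/60`, `m₁ = 17/60`, the quantities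
`κ = e^{2πi(2m₀+m₁)} - e^{2πi(m₀+2m₁)}` and `r = -e^{6πi(m₀+m₁)}κ² - 1`
satisfy `r = φ²` and `|κ|² = 2 + φ`, where `φ = (1+√5)/2` is the golden ratio. -/
theorem stmt_11 (m₀ m₁ : ℝ) (hm₀ : m₀ = 53 / 60) (hm₁ : m₁ = 17 / 60)
    (φ : ℝ) (hφ : φ = (1 + Real.sqrt 5) / 2)
    (κ r : ℂ)
    (hκ : κ = Complex.exp (2 * Real.pi * Complex.I * (2 * m₀ + m₁)) -
      Complex.exp (2 * Real.pi * Complex.I * (m₀ + 2 * m₁)))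
    (hr : r = -Complex.exp (6 * Real.pi * Complex.I * (m₀ + m₁)) * κ ^ 2 - 1) :
    r = ((φ : ℂ)) ^ 2 ∧ Complex.normSq κ = 2 + φ := by
  subst hm₀ hm₁ hφ
  have hπ : Complex.exp (Real.pi * I) = -1 := Complex.exp_pi_mul_I
  have hA : Complex.exp (2 * Real.pi * Complex.I * (2 * ((53:ℝ)/60 : ℝ) + ((17:ℝ)/60 : ℝ)))
      = Complex.exp (Real.pi * I / 10) := by
    rw [show (2 * (Real.pi:ℂ) * Complex.I * (2 * ((53:ℝ)/60 : ℝ) + ((17:ℝ)/60 : ℝ)))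
        = (Real.pi:ℂ) * I / 10 + (2:ℤ) * (2 * Real.pi * I) by push_cast; ring,
      Complex.exp_add, Complex.exp_int_mul_two_pi_mul_I, mul_one]
  have hB : Complex.exp (2 * Real.pi * Complex.I * (((53:ℝ)/60 : ℝ) + 2 * ((17:ℝ)/60 : ℝ)))
      = -Complex.exp (-(Real.pi * I / 10)) := by
    rw [show (2 * (Real.pi:ℂ) * Complex.I * (((53:ℝ)/60 : ℝ) + 2 * ((17:ℝ)/60 : ℝ)))
        = (Real.pi:ℂ) * I + -((Real.pi:ℂ) * I / 10) + (1:ℤ) * (2 * Real.pi * I) by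
          push_cast; ring,
      Complex.exp_add, Complex.exp_int_mul_two_pi_mul_I, mul_one, Complex.exp_add, hπ]
    ring
  have hC : Complex.exp (6 * Real.pi * Complex.I * (((53:ℝ)/60 : ℝ) + ((17:ℝ)/60 : ℝ))) = -1 := by
    rw [show (6 * (Real.pi:ℂ) * Complex.I * (((53:ℝ)/60 : ℝ) + ((17:ℝ)/60 : ℝ)))
        = (Real.pi:ℂ) * I + (3:ℤ) * (2 * Real.pi * I) by push_cast; ring,
      Complex.exp_add, Complex.exp_int_mul_two_pi_mul_I, mul_one, hπ]
  have hκ' : κ = ((2 * Real.cos (Real.pi / 10) : ℝ) : ℂ) := by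
    rw [hκ, hA, hB]
    push_cast
    rw [Complex.cos]
    rw [show ((Real.pi:ℂ)/10 * I) = Real.pi * I / 10 by ring]
    ring
  have h5 : Real.sqrt 5 ^ 2 = 5 := Real.sq_sqrt (by norm_num)
  have hcos : Real.cos (Real.pi / 5) = (1 + Real.sqrt 5) / 4 := Real.cos_pi_div_five
  have hsq : (2 * Real.cos (Real.pi / 10)) ^ 2 = 2 + (1 + Real.sqrt 5) / 2 := by
    have h2 : Real.cos (2 * (Real.pi / 10)) = 2 * Real.cos (Real.pi / 10) ^ 2 - 1 :=
      Real.cos_two_mul _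
    rw [show 2 * (Real.pi / 10) = Real.pi / 5 by ring, hcos] at h2
    nlinarith [h2]
  constructor
  · rw [hr, hC, hκ', ← Complex.ofReal_pow, hsq]
    have h5c : ((Real.sqrt 5 : ℝ) : ℂ) ^ 2 = 5 := by norm_cast
    push_cast
    linear_combination (-1/4 : ℂ) * h5c
  · rw [hκ', Complex.normSq_ofReal, ← sq, hsq]
end
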